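/- (Lemma 'Growth curve'.) For any constants M̄, h, ε > 0 there exist ε′ > 0 and n₁ ∈ ℕ with the following property. Let n > n₁, let A₁, …, A_n ∈ SL(2,ℝ) satisfy ‖A_i‖ ≤ M̄ for all i, let L₀ = 0, L₁, …, L_n be an (h, n·ε′)-growing sequence, let 0 ≤ m₀ ≤ m₁ ≤ n be such that the part [m₀, m₁] of the product A_n⋯A₁ is (L, n·ε′)-hyperbolic, and let v₀ ∈ ℝ² ∖ {0} be such that v_{m₀} has the least norm among v_{m₀}, v_{m₀+1}, …, v_{m₁} (i.e. |v_{m₀}| ≤ |v_m| for all m ∈ {m₀, …, m₁}). Then for every m ∈ {m₀, m₀+1, …, m₁}: |log|v_m| − log|v_{m₀}| − (L_m − L_{m₀})| ≤ n·ε. -/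

import Mathlib

noncomputable section

/-- The space of 2 × 2 real matrices. -/
abbrev Mat2 : Type := Matrix (Fin 2) (Fin 2) ℝ

/-- The Euclidean norm of a vector in `ℝ²`. -/
def vnorm (v : Fin 2 → ℝ) : ℝ := Real.sqrt (v 0 ^ 2 + v 1 ^ 2)

/-- The Euclidean operator norm of a 2 × 2 real matrix. -/
def mnorm (A : Mat2) : ℝ := ‖LinearMap.toContinuousLinearMap (Matrix.toEuclideanLin A)‖

/-- `dblock A m m' = A_{m'} ⋯ A_{m+1}` (so `dblock A m m = 1`); in particular
`dblock A 0 m = A_m ⋯ A_1`, and `v_m = dblock A 0 m *ᵥ v₀`. -/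
def dblock (A : ℕ → Mat2) (m m' : ℕ) : Mat2 :=
  (((List.range' (m + 1) (m' - m)).map A).reverse).prod

/-!
Write `δ = n ε'`. The upper bound is submultiplicativity along the hyperbolic part,
`|v_m| ≤ ‖T_{[m₀,m]}‖ |v_{m₀}|`. For the lower bound, if `L` grows by less than `2δ + log 2` on
`[m₀, m₁]`, the minimality of `|v_{m₀}|` suffices, since `L` is almost nondecreasing. Otherwise,
as the steps of `L` are at most `log M̄ + δ`, there is a first `p` with
`2δ + log 2 ≤ L_p - L_{m₀} ≤ 4δ`. Let `D = T_{[m₀,m₁]} ∈ SL(2,ℝ)` have singular directions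
`u⁺, u⁻` (so `|D u⁻| = ‖D‖⁻¹`), and write `v_{m₀} = a u⁺ + b u⁻`. Since
`|T_{[m₀,p]} u⁻| ≤ ‖T_{[p,m₁]}‖ / ‖D‖ ≤ 1/2`, the inequality `|v_{m₀}| ≤ |v_p|` forces
`2 |a| ‖T_{[m₀,p]}‖ ≥ |v_{m₀}|`, whence `|v_{m₁}| ≥ |a| ‖D‖ ≥ e^{L_{m₁} - L_{m₀} - 7δ} |v_{m₀}|`.
Finally `|v_{m₁}| ≤ ‖T_{[m,m₁]}‖ |v_m|` brings this back to `m` at the cost of one more `δ`.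
-/

open Matrix Real
open scoped Matrix.Norms.L2Operator

theorem ContinuousLinearMap.exists_norm_eq_one_and_norm_apply_eq_opNorm {E F : Type*}
    [NormedAddCommGroup E] [NormedSpace ℝ E] [FiniteDimensional ℝ E] [Nontrivial E]
    [SeminormedAddCommGroup F] [NormedSpace ℝ F] (f : E →L[ℝ] F) :
    ∃ x, ‖x‖ = 1 ∧ ‖f x‖ = ‖f‖ := by
  obtain ⟨x, hx, hmax⟩ := (isCompact_sphere (0 : E) 1).exists_isMaxOn
    (NormedSpace.sphere_nonempty.2 zero_le_one) f.continuous.norm.continuousOn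
  rw [mem_sphere_zero_iff_norm] at hx
  refine ⟨x, hx, le_antisymm (by simpa [hx] using f.le_opNorm x) ?_⟩
  exact f.opNorm_le_of_unit_norm (norm_nonneg _) fun y hy => hmax (mem_sphere_zero_iff_norm.2 hy)

lemma mnorm_eq_norm (A : Mat2) : mnorm A = ‖A‖ := rfl

lemma vnorm_eq_norm_toLp (v : Fin 2 → ℝ) : vnorm v = ‖WithLp.toLp 2 v‖ := by
  rw [EuclideanSpace.norm_eq, Fin.sum_univ_two]
  simp [vnorm, sq_abs]

lemma vnorm_sq (v : Fin 2 → ℝ) : vnorm v ^ 2 = v 0 ^ 2 + v 1 ^ 2 :=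
  Real.sq_sqrt (by positivity)

lemma vnorm_nonneg (v : Fin 2 → ℝ) : 0 ≤ vnorm v := Real.sqrt_nonneg _

lemma vnorm_pos {v : Fin 2 → ℝ} (hv : v ≠ 0) : 0 < vnorm v := by
  rw [vnorm_eq_norm_toLp]; simpa using hv

lemma vnorm_add_le (v w : Fin 2 → ℝ) : vnorm (v + w) ≤ vnorm v + vnorm w := by
  simpa only [vnorm_eq_norm_toLp, WithLp.toLp_add] using norm_add_le _ _

lemma vnorm_smul (a : ℝ) (v : Fin 2 → ℝ) : vnorm (a • v) = |a| * vnorm v := by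
  simp only [vnorm_eq_norm_toLp, WithLp.toLp_smul, norm_smul, Real.norm_eq_abs]

lemma vnorm_mulVec_le (A : Mat2) (v : Fin 2 → ℝ) : vnorm (A *ᵥ v) ≤ mnorm A * vnorm v := by
  rw [vnorm_eq_norm_toLp, vnorm_eq_norm_toLp, mnorm_eq_norm]
  exact A.l2_opNorm_mulVec (WithLp.toLp 2 v)

lemma mnorm_nonneg (A : Mat2) : 0 ≤ mnorm A := norm_nonneg _

lemma mnorm_one : mnorm 1 = 1 := by
  rw [mnorm_eq_norm, CStarRing.norm_one]

lemma exists_vnorm_eq_one_and_vnorm_mulVec_eq_mnorm (A : Mat2) :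
    ∃ u, vnorm u = 1 ∧ vnorm (A *ᵥ u) = mnorm A := by
  obtain ⟨x, hx, hAx⟩ := (toEuclideanCLM (𝕜 := ℝ) A).exists_norm_eq_one_and_norm_apply_eq_opNorm
  refine ⟨x.ofLp, by simpa [vnorm_eq_norm_toLp] using hx, ?_⟩
  rwa [vnorm_eq_norm_toLp, ← toEuclideanCLM_toLp, WithLp.toLp_ofLp, mnorm_eq_norm]

lemma vnorm_smul_add_smul_sq (s t : ℝ) (x y : Fin 2 → ℝ) :
    vnorm (s • x + t • y) ^ 2 =
      s ^ 2 * vnorm x ^ 2 + 2 * s * t * (x ⬝ᵥ y) + t ^ 2 * vnorm y ^ 2 := by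
  simp only [vnorm_sq, dotProduct, Fin.sum_univ_two, Pi.add_apply, Pi.smul_apply, smul_eq_mul]
  ring

def rot90 (u : Fin 2 → ℝ) : Fin 2 → ℝ := ![-u 1, u 0]

lemma dotProduct_rot90_self (u : Fin 2 → ℝ) : u ⬝ᵥ rot90 u = 0 := by
  simp only [rot90, dotProduct, Fin.sum_univ_two, Matrix.cons_val_zero, Matrix.cons_val_one]
  ring

lemma vnorm_rot90 (u : Fin 2 → ℝ) : vnorm (rot90 u) = vnorm u := by
  simp only [vnorm, rot90, Matrix.cons_val_zero, Matrix.cons_val_one]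
  ring_nf

section UnitFrame

variable {u : Fin 2 → ℝ} (hu : vnorm u = 1)
include hu

lemma eq_smul_add_smul_rot90 (v : Fin 2 → ℝ) :
    v = (v ⬝ᵥ u) • u + (v ⬝ᵥ rot90 u) • rot90 u := by
  have hu' : u 0 ^ 2 + u 1 ^ 2 = 1 := by rw [← vnorm_sq, hu, one_pow]
  ext i
  fin_cases i <;>
    simp only [Fin.zero_eta, Fin.mk_one, dotProduct, Fin.sum_univ_two, rot90, cons_val_zero,
      cons_val_one, Pi.add_apply, Pi.smul_apply, smul_eq_mul] <;>
    linear_combination -(v _) * hu'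

lemma vnorm_sq_eq_dotProduct_sq_add (v : Fin 2 → ℝ) :
    vnorm v ^ 2 = (v ⬝ᵥ u) ^ 2 + (v ⬝ᵥ rot90 u) ^ 2 := by
  conv_lhs => rw [eq_smul_add_smul_rot90 hu v]
  rw [vnorm_smul_add_smul_sq, dotProduct_rot90_self, vnorm_rot90, hu]
  ring

lemma mulVec_dotProduct_mulVec_rot90_eq_zero {A : Mat2} (hAu : vnorm (A *ᵥ u) = mnorm A) :
    (A *ᵥ u) ⬝ᵥ (A *ᵥ rot90 u) = 0 := by
  have hbound : ∀ s t : ℝ, 2 * s * t * ((A *ᵥ u) ⬝ᵥ (A *ᵥ rot90 u)) ≤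
      t ^ 2 * (vnorm (A *ᵥ u) ^ 2 - vnorm (A *ᵥ rot90 u) ^ 2) := by
    intro s t
    have h := pow_le_pow_left₀ (vnorm_nonneg _) (vnorm_mulVec_le A (s • u + t • rot90 u)) 2
    rw [mul_pow, vnorm_smul_add_smul_sq, vnorm_rot90, dotProduct_rot90_self, hu, ← hAu,
      mulVec_add, mulVec_smul, mulVec_smul, vnorm_smul_add_smul_sq] at h
    linarith
  -- a function of `s` that is linear and bounded above has slope zero
  have := hbound (vnorm (A *ᵥ u) ^ 2 + 1) ((A *ᵥ u) ⬝ᵥ (A *ᵥ rot90 u))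
  nlinarith [sq_nonneg ((A *ᵥ u) ⬝ᵥ (A *ᵥ rot90 u)), sq_nonneg (vnorm (A *ᵥ rot90 u))]

end UnitFrame

/-- Lagrange's identity, with the cross product of `A u` and `A (rot90 u)` equal to
`det A * ‖u‖²`. -/
lemma vnorm_mulVec_sq_mul_vnorm_mulVec_rot90_sq (A : Mat2) (u : Fin 2 → ℝ) :
    vnorm (A *ᵥ u) ^ 2 * vnorm (A *ᵥ rot90 u) ^ 2 =
      ((A *ᵥ u) ⬝ᵥ (A *ᵥ rot90 u)) ^ 2 + (A.det * vnorm u ^ 2) ^ 2 := by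
  simp only [vnorm_sq, det_fin_two, rot90, mulVec, dotProduct, Fin.sum_univ_two,
    Matrix.cons_val_zero, Matrix.cons_val_one]
  ring

/-- Singular value decomposition of `D ∈ SL(2, ℝ)`: the singular values are `‖D‖` and `‖D‖⁻¹`. -/
lemma exists_singular_frame {D : Mat2} (hD : D.det = 1) :
    ∃ u, vnorm u = 1 ∧ ∀ v, vnorm (D *ᵥ v) ^ 2 * mnorm D ^ 2 =
      (v ⬝ᵥ u) ^ 2 * mnorm D ^ 4 + (v ⬝ᵥ rot90 u) ^ 2 := by
  obtain ⟨u, hu, hDu⟩ := exists_vnorm_eq_one_and_vnorm_mulVec_eq_mnorm D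
  have horth := mulVec_dotProduct_mulVec_rot90_eq_zero hu hDu
  have hprod := vnorm_mulVec_sq_mul_vnorm_mulVec_rot90_sq D u
  rw [horth, hD, hu, hDu] at hprod
  refine ⟨u, hu, fun v => ?_⟩
  conv_lhs => rw [eq_smul_add_smul_rot90 hu v]
  rw [mulVec_add, mulVec_smul, mulVec_smul, vnorm_smul_add_smul_sq, horth, hDu]
  linear_combination (v ⬝ᵥ rot90 u) ^ 2 * hprod

section SpecialLinear

variable {D : Mat2} (hD : D.det = 1)
include hD

lemma one_le_mnorm : 1 ≤ mnorm D := by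
  obtain ⟨u, hu, hDu⟩ := exists_vnorm_eq_one_and_vnorm_mulVec_eq_mnorm D
  have hprod := vnorm_mulVec_sq_mul_vnorm_mulVec_rot90_sq D u
  rw [hD, hu, hDu] at hprod
  have hle := vnorm_mulVec_le D (rot90 u)
  rw [vnorm_rot90, hu, mul_one] at hle
  have h4 : 1 ≤ mnorm D ^ 4 := by
    nlinarith [sq_nonneg ((D *ᵥ u) ⬝ᵥ (D *ᵥ rot90 u)), pow_le_pow_left₀ (vnorm_nonneg _) hle 2,
      sq_nonneg (mnorm D)]
  exact (one_le_pow_iff_of_nonneg (mnorm_nonneg D) four_ne_zero).1 h4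

lemma mnorm_pos : 0 < mnorm D := one_pos.trans_le (one_le_mnorm hD)

lemma vnorm_le_mnorm_mul_vnorm_mulVec (v : Fin 2 → ℝ) : vnorm v ≤ mnorm D * vnorm (D *ᵥ v) := by
  obtain ⟨u, hu, hframe⟩ := exists_singular_frame hD
  have hv := vnorm_sq_eq_dotProduct_sq_add hu v
  have h := hframe v
  have h1 := one_le_pow₀ (n := 4) (one_le_mnorm hD)
  rw [← pow_le_pow_iff_left₀ (vnorm_nonneg v)
    (by positivity [mnorm_nonneg D, vnorm_nonneg (D *ᵥ v)]) two_ne_zero]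
  nlinarith [sq_nonneg (v ⬝ᵥ u)]

lemma mulVec_ne_zero {v : Fin 2 → ℝ} (hv : v ≠ 0) : D *ᵥ v ≠ 0 := by
  intro h
  have := vnorm_le_mnorm_mul_vnorm_mulVec hD v
  rw [h, show vnorm 0 = 0 by simp [vnorm], mul_zero] at this
  exact (vnorm_pos hv).not_ge this

lemma log_vnorm_mulVec_le {v : Fin 2 → ℝ} (hv : v ≠ 0) :
    log (vnorm (D *ᵥ v)) ≤ log (mnorm D) + log (vnorm v) := by
  rw [← log_mul (mnorm_pos hD).ne' (vnorm_pos hv).ne']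
  exact log_le_log (vnorm_pos (mulVec_ne_zero hD hv)) (vnorm_mulVec_le D v)

end SpecialLinear

lemma mnorm_mul_mul_vnorm_le {P Q : Mat2} (hP : P.det = 1) (hQ : Q.det = 1)
    (hQP : 2 * mnorm Q ≤ mnorm (Q * P)) {w : Fin 2 → ℝ} (hw : vnorm w ≤ vnorm (P *ᵥ w)) :
    mnorm (Q * P) * vnorm w ≤ 2 * mnorm P * vnorm ((Q * P) *ᵥ w) := by
  have hD : (Q * P).det = 1 := by rw [det_mul, hQ, hP, one_mul]
  have hs := one_le_mnorm hD
  obtain ⟨u, hu, hframe⟩ := exists_singular_frame hD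
  set s := mnorm (Q * P)
  set a := w ⬝ᵥ u
  set b := w ⬝ᵥ rot90 u
  have hb : |b| ≤ vnorm w :=
    abs_le_of_sq_le_sq (by nlinarith [vnorm_sq_eq_dotProduct_sq_add hu w]) (vnorm_nonneg w)
  have ha : |a| * s ≤ vnorm ((Q * P) *ᵥ w) := by
    have hsq : (a * s) ^ 2 * s ^ 2 ≤ vnorm ((Q * P) *ᵥ w) ^ 2 * s ^ 2 := by
      nlinarith [hframe w, sq_nonneg b]
    have h := abs_le_of_sq_le_sq (le_of_mul_le_mul_right hsq (by positivity)) (vnorm_nonneg _)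
    rwa [abs_mul, abs_of_nonneg (by linarith : (0 : ℝ) ≤ s)] at h
  have hcontract : vnorm ((Q * P) *ᵥ rot90 u) * s = 1 := by
    have h := hframe (rot90 u)
    have hu' := vnorm_sq_eq_dotProduct_sq_add hu (rot90 u)
    rw [dotProduct_comm, dotProduct_rot90_self] at h hu'
    rw [vnorm_rot90, hu] at hu'
    refine (pow_eq_one_iff_of_nonneg (by positivity [vnorm_nonneg ((Q * P) *ᵥ rot90 u)])
      two_ne_zero).1 ?_
    linear_combination h - hu'
  have hPu' : 2 * vnorm (P *ᵥ rot90 u) ≤ 1 := by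
    have := vnorm_le_mnorm_mul_vnorm_mulVec hQ (P *ᵥ rot90 u)
    rw [mulVec_mulVec] at this
    nlinarith [vnorm_nonneg ((Q * P) *ᵥ rot90 u)]
  have hPw : vnorm (P *ᵥ w) ≤ |a| * mnorm P + |b| * vnorm (P *ᵥ rot90 u) := by
    conv_lhs => rw [eq_smul_add_smul_rot90 hu w]
    rw [mulVec_add, mulVec_smul, mulVec_smul]
    refine (vnorm_add_le _ _).trans ?_
    rw [vnorm_smul, vnorm_smul]
    gcongr
    simpa [hu] using vnorm_mulVec_le P u
  have hw' : vnorm w ≤ 2 * |a| * mnorm P := by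
    nlinarith [mul_le_mul hb hPu' (mul_nonneg zero_le_two (vnorm_nonneg _)) (vnorm_nonneg w)]
  nlinarith [mul_le_mul_of_nonneg_left ha (mul_nonneg zero_le_two (mnorm_nonneg P))]

lemma log_mnorm_mul_add_log_vnorm_le {P Q : Mat2} (hP : P.det = 1) (hQ : Q.det = 1)
    (hQP : log 2 + log (mnorm Q) ≤ log (mnorm (Q * P))) {w : Fin 2 → ℝ} (hw₀ : w ≠ 0)
    (hw : vnorm w ≤ vnorm (P *ᵥ w)) :
    log (mnorm (Q * P)) + log (vnorm w) ≤
      log 2 + log (mnorm P) + log (vnorm ((Q * P) *ᵥ w)) := by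
  have hD : (Q * P).det = 1 := by rw [det_mul, hQ, hP, one_mul]
  rw [← log_mul two_ne_zero (mnorm_pos hQ).ne',
    log_le_log_iff (mul_pos two_pos (mnorm_pos hQ)) (mnorm_pos hD)] at hQP
  have key := mnorm_mul_mul_vnorm_le hP hQ hQP hw
  rw [← log_mul (mnorm_pos hD).ne' (vnorm_pos hw₀).ne', ← log_mul two_ne_zero (mnorm_pos hP).ne',
    ← log_mul (by positivity [mnorm_pos hP]) (vnorm_pos (mulVec_ne_zero hD hw₀)).ne']
  exact log_le_log (mul_pos (mnorm_pos hD) (vnorm_pos hw₀)) key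

section Blocks

variable (A : ℕ → Mat2)

@[simp]
lemma dblock_self (m : ℕ) : dblock A m m = 1 := by
  simp [dblock]

lemma dblock_succ (m : ℕ) : dblock A m (m + 1) = A (m + 1) := by
  simp [dblock]

lemma dblock_mul_dblock {m m' m'' : ℕ} (h₁ : m ≤ m') (h₂ : m' ≤ m'') :
    dblock A m' m'' * dblock A m m' = dblock A m m'' := by
  have hrange := List.range'_append (s := m + 1) (m := m' - m) (n := m'' - m') (step := 1)
  rw [show m + 1 + 1 * (m' - m) = m' + 1 by omega,
    show m' - m + (m'' - m') = m'' - m by omega] at hrange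
  rw [dblock, dblock, dblock, ← hrange, List.map_append, List.reverse_append, List.prod_append]

lemma det_dblock {m₀ m₁ m m' : ℕ} (hA : ∀ i, m₀ < i → i ≤ m₁ → (A i).det = 1) (hm : m₀ ≤ m)
    (hm' : m' ≤ m₁) : (dblock A m m').det = 1 := by
  refine List.prod_induction (fun B : Mat2 => B.det = 1) (fun B C hB hC => ?_) det_one ?_
  · rw [det_mul, hB, hC, one_mul]
  · simp only [List.mem_reverse, List.mem_map, List.mem_range'_1]
    rintro _ ⟨i, hi, rfl⟩
    exact hA i (by omega) (by omega)

end Blocks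

lemma exists_crossing_of_step_le {f : ℕ → ℝ} {a b : ℕ} {c d : ℝ} (hab : a ≤ b) (ha : f a < c)
    (hb : c ≤ f b) (hstep : ∀ k, a ≤ k → k < b → f (k + 1) ≤ f k + d) :
    ∃ p, a < p ∧ p ≤ b ∧ c ≤ f p ∧ f p < c + d := by
  induction b, hab using Nat.le_induction with
  | base => exact absurd hb ha.not_ge
  | succ b hab ih =>
    by_cases hcb : c ≤ f b
    · obtain ⟨p, hap, hpb, hp⟩ := ih hcb fun k hak hkb => hstep k hak (by omega)
      exact ⟨p, hap, by omega, hp⟩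
    · have := hstep b hab (by omega)
      exact ⟨b + 1, by omega, le_rfl, hb, by linarith⟩

def IsHyperbolicPart (A : ℕ → Mat2) (L : ℕ → ℝ) (r : ℝ) (n₁ n₂ : ℕ) : Prop :=
  ∀ m m' : ℕ, n₁ ≤ m → m < m' → m' ≤ n₂ → |log (mnorm (dblock A m m')) - (L m' - L m)| ≤ r

namespace IsHyperbolicPart

variable {A : ℕ → Mat2} {L : ℕ → ℝ} {δ Mbar : ℝ} {m₀ m₁ : ℕ} {w : Fin 2 → ℝ}

lemma abs_log_mnorm_sub_le (hhyp : IsHyperbolicPart A L δ m₀ m₁) (hδ : 0 ≤ δ) {m m' : ℕ}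
    (h₀ : m₀ ≤ m) (hmm' : m ≤ m') (h₁ : m' ≤ m₁) :
    |log (mnorm (dblock A m m')) - (L m' - L m)| ≤ δ := by
  rcases hmm'.eq_or_lt with rfl | hlt
  · simpa [mnorm_one] using hδ
  · exact hhyp m m' h₀ hlt h₁

lemma log_vnorm_dblock_mulVec_le (hhyp : IsHyperbolicPart A L δ m₀ m₁) (hδ : 0 ≤ δ)
    (hdet : ∀ i, m₀ < i → i ≤ m₁ → (A i).det = 1) (hw : w ≠ 0) {k k' : ℕ}
    (hk₀ : m₀ ≤ k) (hkk' : k ≤ k') (hk'₁ : k' ≤ m₁) :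
    log (vnorm (dblock A m₀ k' *ᵥ w)) ≤
      log (vnorm (dblock A m₀ k *ᵥ w)) + (L k' - L k) + δ := by
  rw [← dblock_mul_dblock A hk₀ hkk', ← mulVec_mulVec]
  have hlog := log_vnorm_mulVec_le (det_dblock A hdet hk₀ hk'₁)
    (mulVec_ne_zero (det_dblock A hdet le_rfl (hkk'.trans hk'₁)) hw)
  have hhyp' := abs_le.1 (hhyp.abs_log_mnorm_sub_le hδ hk₀ hkk' hk'₁)
  linarith [hhyp'.2]

lemma le_log_vnorm_dblock_mulVec_of_crossing (hhyp : IsHyperbolicPart A L δ m₀ m₁)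
    (hδ : log 2 ≤ δ) (hdet : ∀ i, m₀ < i → i ≤ m₁ → (A i).det = 1) (hw : w ≠ 0) {p : ℕ}
    (hp₀ : m₀ ≤ p) (hp₁ : p ≤ m₁) (hmin : vnorm w ≤ vnorm (dblock A m₀ p *ᵥ w))
    (hLp : 2 * δ + log 2 ≤ L p - L m₀) (hLp' : L p - L m₀ ≤ 4 * δ) :
    L m₁ - L m₀ - 7 * δ ≤ log (vnorm (dblock A m₀ m₁ *ᵥ w)) - log (vnorm w) := by
  have hδ₀ : 0 ≤ δ := (log_pos one_lt_two).le.trans hδ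
  have hP := abs_le.1 (hhyp.abs_log_mnorm_sub_le hδ₀ le_rfl hp₀ hp₁)
  have hQ := abs_le.1 (hhyp.abs_log_mnorm_sub_le hδ₀ hp₀ hp₁ le_rfl)
  have hQP := abs_le.1 (hhyp.abs_log_mnorm_sub_le hδ₀ le_rfl (hp₀.trans hp₁) le_rfl)
  rw [← dblock_mul_dblock A hp₀ hp₁] at hQP ⊢
  have key := log_mnorm_mul_add_log_vnorm_le (det_dblock A hdet le_rfl hp₁)
    (det_dblock A hdet hp₀ le_rfl) (by linarith) hw hmin
  linarith

theorem abs_log_vnorm_dblock_mulVec_sub_le (hhyp : IsHyperbolicPart A L δ m₀ m₁)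
    (hA : ∀ i, m₀ < i → i ≤ m₁ → (A i).det = 1 ∧ mnorm (A i) ≤ Mbar)
    (hδ : log 2 ≤ δ) (hδM : log 2 + log Mbar ≤ δ) (hL : ∀ m, m₀ ≤ m → m ≤ m₁ → L m ≤ L m₁ + δ)
    (hw : w ≠ 0) (hmin : ∀ m, m₀ ≤ m → m ≤ m₁ → vnorm w ≤ vnorm (dblock A m₀ m *ᵥ w))
    {m : ℕ} (hm₀ : m₀ ≤ m) (hm₁ : m ≤ m₁) :
    |log (vnorm (dblock A m₀ m *ᵥ w)) - log (vnorm w) - (L m - L m₀)| ≤ 8 * δ := by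
  have hδ₀ : 0 ≤ δ := (log_pos one_lt_two).le.trans hδ
  have hdet i (hi : m₀ < i) (hi' : i ≤ m₁) : (A i).det = 1 := (hA i hi hi').1
  have hstart : log (vnorm (dblock A m₀ m₀ *ᵥ w)) = log (vnorm w) := by simp
  have hup := hhyp.log_vnorm_dblock_mulVec_le hδ₀ hdet hw le_rfl hm₀ hm₁
  rw [abs_le]
  refine ⟨?_, by linarith⟩
  by_cases hshort : L m₁ - L m₀ < 2 * δ + log 2
  · have := log_le_log (vnorm_pos hw) (hmin m hm₀ hm₁)
    linarith [hL m hm₀ hm₁]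
  have hstep k (hk₀ : m₀ ≤ k) (hk₁ : k < m₁) :
      L (k + 1) - L m₀ ≤ L k - L m₀ + (log Mbar + δ) := by
    have h := abs_le.1 (hhyp k (k + 1) hk₀ (Nat.lt_succ_self k) hk₁)
    rw [dblock_succ] at h
    have := log_le_log (mnorm_pos (hdet (k + 1) (by omega) hk₁)) (hA (k + 1) (by omega) hk₁).2
    linarith
  obtain ⟨p, hp₀, hp₁, hLp, hLp'⟩ := exists_crossing_of_step_le (f := fun k => L k - L m₀)
    (hm₀.trans hm₁) (by simp only [sub_self]; linarith [log_pos one_lt_two]) (not_lt.1 hshort)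
    hstep
  have hlong := hhyp.le_log_vnorm_dblock_mulVec_of_crossing hδ hdet hw hp₀.le hp₁
    (hmin p hp₀.le hp₁) hLp (by linarith)
  linarith [hhyp.log_vnorm_dblock_mulVec_le hδ₀ hdet hw hm₀ hm₁ le_rfl]

end IsHyperbolicPart

theorem stmt_15_general (Mbar h ε : ℝ) (hh : 0 < h) (hε : 0 < ε) :
    ∃ ε' : ℝ, 0 < ε' ∧ ∃ n₁ : ℕ, ∀ n : ℕ, n₁ < n →
      ∀ A : ℕ → Mat2, (∀ i : ℕ, 1 ≤ i → i ≤ n → (A i).det = 1 ∧ mnorm (A i) ≤ Mbar) →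
      ∀ L : ℕ → ℝ, L 0 = 0 →
      -- `L` is `(h, n·ε')`-growing
      (∀ m m' : ℕ, m < m' → m' ≤ n → h * ((m' : ℝ) - (m : ℝ)) - (n : ℝ) * ε' ≤ L m' - L m) →
      ∀ m₀ m₁ : ℕ, m₀ ≤ m₁ → m₁ ≤ n →
      -- the part `[m₀, m₁]` of the product is `(L, n·ε')`-hyperbolic
      (∀ m m' : ℕ, m₀ ≤ m → m < m' → m' ≤ m₁ →
        |Real.log (mnorm (dblock A m m')) - (L m' - L m)| ≤ (n : ℝ) * ε') →
      ∀ v₀ : Fin 2 → ℝ, v₀ ≠ 0 →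
      -- `v_{m₀}` has the least norm among `v_{m₀}, …, v_{m₁}`
      (∀ m : ℕ, m₀ ≤ m → m ≤ m₁ →
        vnorm ((dblock A 0 m₀).mulVec v₀) ≤ vnorm ((dblock A 0 m).mulVec v₀)) →
      ∀ m : ℕ, m₀ ≤ m → m ≤ m₁ →
        |Real.log (vnorm ((dblock A 0 m).mulVec v₀)) -
          Real.log (vnorm ((dblock A 0 m₀).mulVec v₀)) - (L m - L m₀)| ≤ (n : ℝ) * ε := by
  refine ⟨ε / 8, by positivity, ⌈max (log 2) (log 2 + log Mbar) / (ε / 8)⌉₊, ?_⟩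
  intro n hn A hA L _ hgrow m₀ m₁ hm₀₁ hm₁ hhyp v₀ hv₀ hmin m hm₀ hm
  have hδ := (div_lt_iff₀ (by positivity)).1 (Nat.lt_of_ceil_lt hn)
  rw [max_lt_iff] at hδ
  have hw : dblock A 0 m₀ *ᵥ v₀ ≠ 0 :=
    mulVec_ne_zero (det_dblock A (fun i hi hi' => (hA i hi hi').1) le_rfl (hm₀₁.trans hm₁)) hv₀
  have hv k (hk : m₀ ≤ k) : dblock A 0 k *ᵥ v₀ = dblock A m₀ k *ᵥ (dblock A 0 m₀ *ᵥ v₀) := by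
    rw [mulVec_mulVec, dblock_mul_dblock A (Nat.zero_le m₀) hk]
  have hL k (hk : k ≤ m₁) : L k ≤ L m₁ + n * (ε / 8) := by
    rcases hk.eq_or_lt with rfl | hlt
    · linarith [show (0 : ℝ) ≤ n * (ε / 8) by positivity]
    · have := hgrow k m₁ hlt hm₁
      have : 0 ≤ h * ((m₁ : ℝ) - k) := mul_nonneg hh.le (sub_nonneg.2 (Nat.cast_le.2 hlt.le))
      linarith
  rw [hv m hm₀, show (n : ℝ) * ε = 8 * (n * (ε / 8)) by ring]
  exact IsHyperbolicPart.abs_log_vnorm_dblock_mulVec_sub_le hhyp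
    (fun i hi hi' => hA i (by omega) (by omega)) hδ.1.le hδ.2.le (fun k _ hk => hL k hk) hw
    (fun k hk₀ hk₁ => by rw [← hv k hk₀]; exact hmin k hk₀ hk₁) hm₀ hm

theorem stmt_15 (Mbar h ε : ℝ) (hM : 0 < Mbar) (hh : 0 < h) (hε : 0 < ε) :
    ∃ ε' : ℝ, 0 < ε' ∧ ∃ n₁ : ℕ, ∀ n : ℕ, n₁ < n →
      ∀ A : ℕ → Mat2, (∀ i : ℕ, 1 ≤ i → i ≤ n → (A i).det = 1 ∧ mnorm (A i) ≤ Mbar) →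
      ∀ L : ℕ → ℝ, L 0 = 0 →
      -- `L` is `(h, n·ε')`-growing
      (∀ m m' : ℕ, m < m' → m' ≤ n → h * ((m' : ℝ) - (m : ℝ)) - (n : ℝ) * ε' ≤ L m' - L m) →
      ∀ m₀ m₁ : ℕ, m₀ ≤ m₁ → m₁ ≤ n →
      -- the part `[m₀, m₁]` of the product is `(L, n·ε')`-hyperbolic
      (∀ m m' : ℕ, m₀ ≤ m → m < m' → m' ≤ m₁ →
        |Real.log (mnorm (dblock A m m')) - (L m' - L m)| ≤ (n : ℝ) * ε') →
      ∀ v₀ : Fin 2 → ℝ, v₀ ≠ 0 →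
      -- `v_{m₀}` has the least norm among `v_{m₀}, …, v_{m₁}`
      (∀ m : ℕ, m₀ ≤ m → m ≤ m₁ →
        vnorm ((dblock A 0 m₀).mulVec v₀) ≤ vnorm ((dblock A 0 m).mulVec v₀)) →
      ∀ m : ℕ, m₀ ≤ m → m ≤ m₁ →
        |Real.log (vnorm ((dblock A 0 m).mulVec v₀)) -
          Real.log (vnorm ((dblock A 0 m₀).mulVec v₀)) - (L m - L m₀)| ≤ (n : ℝ) * ε :=
  stmt_15_general Mbar h ε hh hε
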